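/- Let λ > 0 and 1 ≤ k < l ≤ n with N(k,l) ≤ λ. If k ≤ x, y ≤ l and c_{k,l}(x,y) > λ, then one of x, y lies in K' and the other lies in L'. -/

import Mathlib

noncomputable section

variable {X : Type*} [MetricSpace X]

/-- Path distance between vertices `i` and `j` of the path `p₁, …, pₙ`:
the sum of the edge weights `d(p_t, p_{t+1})` for `min i j ≤ t < max i j`. -/
def pathDist (p : ℕ → X) (i j : ℕ) : ℝ :=
  ∑ t ∈ Finset.Ico (min i j) (max i j), dist (p t) (p (t + 1))

/-- Shortest-path distance between vertices `x` and `y` in the unicyclic graph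
`P̄[k,l]` obtained by adding the shortcut `(p_k, p_l)` of weight `d(p_k, p_l)`. -/
def pbar (p : ℕ → X) (k l x y : ℕ) : ℝ :=
  min (pathDist p x y)
    (min (pathDist p x k + dist (p k) (p l) + pathDist p l y)
         (pathDist p x l + dist (p k) (p l) + pathDist p k y))

/-- The length `|C[k,l]|` of the cycle `C[k,l]`. -/
def cycleLen (p : ℕ → X) (k l : ℕ) : ℝ :=
  pathDist p k l + dist (p k) (p l)

/-- The cycle distance `c_{k,l}(x,y)` for `k ≤ x, y ≤ l`. -/
def cycDist (p : ℕ → X) (k l x y : ℕ) : ℝ :=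
  min (pathDist p x y) (cycleLen p k l - pathDist p x y)

/-- `S(k,l) = max_{k ≤ x ≤ l} p̄_{k,l}(1,x)`. -/
def Sfun (p : ℕ → X) (k l : ℕ) : ℝ :=
  sSup ((fun x => pbar p k l 1 x) '' Set.Icc k l)

/-- `E(k,l) = max_{k ≤ x ≤ l} p̄_{k,l}(x,n)`. -/
def Efun (p : ℕ → X) (n k l : ℕ) : ℝ :=
  sSup ((fun x => pbar p k l x n) '' Set.Icc k l)

/-- `U(k,l) = p̄_{k,l}(1,n)`. -/
def Ufun (p : ℕ → X) (n k l : ℕ) : ℝ :=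
  pbar p k l 1 n

/-- `O(k,l) = max_{k ≤ x < y ≤ l} c_{k,l}(x,y)`. -/
def Ofun (p : ℕ → X) (k l : ℕ) : ℝ :=
  sSup {r | ∃ x y : ℕ, k ≤ x ∧ x < y ∧ y ≤ l ∧ r = cycDist p k l x y}

/-- `N(k,l) = max (S(k,l), E(k,l), U(k,l))`. -/
def Nfun (p : ℕ → X) (n k l : ℕ) : ℝ :=
  max (Sfun p k l) (max (Efun p n k l) (Ufun p n k l))

/-- `M(k,l) = max_{1 ≤ x < y ≤ n} p̄_{k,l}(x,y)`, the diameter of `P̄[k,l]`. -/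
def Mfun (p : ℕ → X) (n k l : ℕ) : ℝ :=
  sSup {r | ∃ x y : ℕ, 1 ≤ x ∧ x < y ∧ y ≤ n ∧ r = pbar p k l x y}

/-!
A point `x` of the cycle is reached from `p₁` (and from `pₙ`) only through `p_k` or `p_l`, so
`p̄(1, x) ≥ min (δ(k,x), δ(x,l))`, and likewise for `p̄(x, n)`. If `x ≤ y` and
`c(x,y) > λ`, then `δ(x,y) > λ`; hence both `δ(x,l)` and `δ(k,y)` exceed `λ`, and the bounds
`S, E ≤ λ` force `δ(k,x) ≤ λ` and `δ(y,l) ≤ λ`.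
-/

section

variable (p : ℕ → X) {n k l x y : ℕ}

lemma pathDist_nonneg (i j : ℕ) : 0 ≤ pathDist p i j :=
  Finset.sum_nonneg fun _ _ => dist_nonneg

lemma pathDist_comm (i j : ℕ) : pathDist p i j = pathDist p j i := by
  simp only [pathDist, min_comm, max_comm]

lemma pathDist_mono {i j i' j' : ℕ} (hi : i ≤ i') (hij : i' ≤ j') (hj : j' ≤ j) :
    pathDist p i' j' ≤ pathDist p i j := by
  simp only [pathDist, min_eq_left hij, max_eq_right hij,
    min_eq_left ((hi.trans hij).trans hj), max_eq_right ((hi.trans hij).trans hj)]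
  exact Finset.sum_le_sum_of_subset_of_nonneg (Finset.Ico_subset_Ico hi hj)
    fun _ _ _ => dist_nonneg

lemma min_pathDist_le_pbar_from_start (hk : 1 ≤ k) (hx : k ≤ x) :
    min (pathDist p k x) (pathDist p x l) ≤ pbar p k l 1 x := by
  have := pathDist_nonneg p 1 k
  have := pathDist_nonneg p 1 l
  have : (0 : ℝ) ≤ dist (p k) (p l) := dist_nonneg
  simp only [pbar, le_min_iff]
  refine ⟨min_le_of_left_le (pathDist_mono p hk hx le_rfl), ?_, min_le_of_left_le ?_⟩
  · rw [pathDist_comm p l x]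
    exact min_le_of_right_le (by linarith)
  · linarith

lemma min_pathDist_le_pbar_to_end (hyl : y ≤ l) (hln : l ≤ n) :
    min (pathDist p k y) (pathDist p y l) ≤ pbar p k l y n := by
  have := pathDist_nonneg p l n
  have := pathDist_nonneg p k n
  have : (0 : ℝ) ≤ dist (p k) (p l) := dist_nonneg
  simp only [pbar, le_min_iff]
  refine ⟨min_le_of_right_le (pathDist_mono p le_rfl hyl hln), ?_, min_le_of_right_le ?_⟩
  · rw [pathDist_comm p y k]
    exact min_le_of_left_le (by linarith)
  · linarith

lemma pathDist_le_of_Sfun_le {lam : ℝ} (hk : 1 ≤ k) (hS : Sfun p k l ≤ lam)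
    (hx : k ≤ x) (hxl : x ≤ l) (hfar : lam < pathDist p x l) : pathDist p k x ≤ lam := by
  have hpbar : pbar p k l 1 x ≤ Sfun p k l :=
    le_csSup ((Set.finite_Icc k l).image _).bddAbove ⟨x, ⟨hx, hxl⟩, rfl⟩
  have := (min_pathDist_le_pbar_from_start p hk hx).trans (hpbar.trans hS)
  exact (min_le_iff.mp this).resolve_right hfar.not_ge

lemma pathDist_le_of_Efun_le {lam : ℝ} (hln : l ≤ n) (hE : Efun p n k l ≤ lam)
    (hy : k ≤ y) (hyl : y ≤ l) (hfar : lam < pathDist p k y) : pathDist p y l ≤ lam := by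
  have hpbar : pbar p k l y n ≤ Efun p n k l :=
    le_csSup ((Set.finite_Icc k l).image _).bddAbove ⟨y, ⟨hy, hyl⟩, rfl⟩
  have := (min_pathDist_le_pbar_to_end p hyl hln).trans (hpbar.trans hE)
  exact (min_le_iff.mp this).resolve_left hfar.not_ge

lemma cycDist_comm (k l x y : ℕ) : cycDist p k l x y = cycDist p k l y x := by
  simp only [cycDist, pathDist_comm p x y]

end

theorem large_cycle_dist_in_KL'_general {X : Type*} [MetricSpace X]
    (n : ℕ) (p : ℕ → X)
    (k l : ℕ) (hk : 1 ≤ k) (hl : l ≤ n)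
    (lam : ℝ) (hN : Nfun p n k l ≤ lam)
    (x y : ℕ) (hx : k ≤ x) (hx' : x ≤ l) (hy : k ≤ y) (hy' : y ≤ l)
    (hc : lam < cycDist p k l x y) :
    (x ∈ {z : ℕ | k ≤ z ∧ z ≤ l ∧ pathDist p k z ≤ lam} \
         {z : ℕ | k ≤ z ∧ z ≤ l ∧ pathDist p z l ≤ lam} ∧
     y ∈ {z : ℕ | k ≤ z ∧ z ≤ l ∧ pathDist p z l ≤ lam} \
         {z : ℕ | k ≤ z ∧ z ≤ l ∧ pathDist p k z ≤ lam}) ∨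
    (y ∈ {z : ℕ | k ≤ z ∧ z ≤ l ∧ pathDist p k z ≤ lam} \
         {z : ℕ | k ≤ z ∧ z ≤ l ∧ pathDist p z l ≤ lam} ∧
     x ∈ {z : ℕ | k ≤ z ∧ z ≤ l ∧ pathDist p z l ≤ lam} \
         {z : ℕ | k ≤ z ∧ z ≤ l ∧ pathDist p k z ≤ lam}) := by
  wlog hxy : x ≤ y generalizing x y
  · exact (this y x hy hy' hx hx' (cycDist_comm p k l x y ▸ hc) (le_of_not_ge hxy)).symm
  have hS : Sfun p k l ≤ lam := (le_max_left _ _).trans hN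
  have hE : Efun p n k l ≤ lam := ((le_max_left _ _).trans (le_max_right _ _)).trans hN
  have hxy_far : lam < pathDist p x y := hc.trans_le (min_le_left _ _)
  have hxl_far : lam < pathDist p x l := hxy_far.trans_le (pathDist_mono p le_rfl hxy hy')
  have hky_far : lam < pathDist p k y := hxy_far.trans_le (pathDist_mono p hx hxy le_rfl)
  exact Or.inl
    ⟨⟨⟨hx, hx', pathDist_le_of_Sfun_le p hk hS hx hx' hxl_far⟩, fun h => h.2.2.not_gt hxl_far⟩,
     ⟨⟨hy, hy', pathDist_le_of_Efun_le p hl hE hy hy' hky_far⟩, fun h => h.2.2.not_gt hky_far⟩⟩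

/-- Let `λ > 0` and `1 ≤ k < l ≤ n` with `N(k,l) ≤ λ`. If
`k ≤ x, y ≤ l` and `c_{k,l}(x,y) > λ`, then one of `x, y` lies in `K' = K \ L` and
the other lies in `L' = L \ K`. -/
theorem large_cycle_dist_in_KL' {X : Type*} [MetricSpace X]
    (n : ℕ) (hn : 2 ≤ n) (p : ℕ → X)
    (k l : ℕ) (hk : 1 ≤ k) (hkl : k < l) (hl : l ≤ n)
    (lam : ℝ) (hlam : 0 < lam) (hN : Nfun p n k l ≤ lam)
    (x y : ℕ) (hx : k ≤ x) (hx' : x ≤ l) (hy : k ≤ y) (hy' : y ≤ l)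
    (hc : lam < cycDist p k l x y) :
    (x ∈ {z : ℕ | k ≤ z ∧ z ≤ l ∧ pathDist p k z ≤ lam} \
         {z : ℕ | k ≤ z ∧ z ≤ l ∧ pathDist p z l ≤ lam} ∧
     y ∈ {z : ℕ | k ≤ z ∧ z ≤ l ∧ pathDist p z l ≤ lam} \
         {z : ℕ | k ≤ z ∧ z ≤ l ∧ pathDist p k z ≤ lam}) ∨
    (y ∈ {z : ℕ | k ≤ z ∧ z ≤ l ∧ pathDist p k z ≤ lam} \
         {z : ℕ | k ≤ z ∧ z ≤ l ∧ pathDist p z l ≤ lam} ∧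
     x ∈ {z : ℕ | k ≤ z ∧ z ≤ l ∧ pathDist p z l ≤ lam} \
         {z : ℕ | k ≤ z ∧ z ≤ l ∧ pathDist p k z ≤ lam}) :=
  large_cycle_dist_in_KL'_general n p k l hk hl lam hN x y hx hx' hy hy' hc
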